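/- Let 𝔊₁, 𝔊₂ be crossed modules of groupoids with common object space X and let M be a crossing from 𝔊₁ to 𝔊₂ (data α₁, α₂, β₁, β₂). Let H₂ act on the semidirect product H₁ ⋊ M (for the M-action on H₁ via α₂) by h₂ · (h₁, m) = (h₁, β₁(h₂)m). Then the groupoid structure of H₁ ⋊ M descends to the quotient H₁ ⋊_{H₂} M: the product [h₁,m]·[k₁,n] = [h₁ · c_{α₂(m)⁻¹}(k₁), mn] and inverse [h₁,m]⁻¹ = [c_{α₂(m)}(h₁)⁻¹, m⁻¹] are well defined, making H₁ ⋊_{H₂} M a groupoid over X. Moreover, the exactness of H₂ —β₁→ M —α₂→ G₁ induces an isomorphism of groupoids H₁ ⋊ G₁ ≅ H₁ ⋊_{H₂} M. -/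
import Mathlib


/-- A groupoid with object space `X`.  Composition is written in "paper
order": `comp g h` is defined when the source of `g` equals the target of
`h`; here `Hom x y` is the set of arrows with source `x` and target `y`, so
for `g : Hom y z` and `h : Hom x y` we have `comp g h : Hom x z`
("first `h`, then `g`"). -/
structure GpdOver (X : Type) where
  Hom : X → X → Type
  id : ∀ x, Hom x x
  comp : ∀ {x y z : X}, Hom y z → Hom x y → Hom x z
  inv : ∀ {x y : X}, Hom x y → Hom y x
  comp_assoc : ∀ {x y z w : X} (g : Hom z w) (h : Hom y z) (k : Hom x y),
    comp (comp g h) k = comp g (comp h k)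
  id_comp : ∀ {x y : X} (g : Hom x y), comp (id y) g = g
  comp_id : ∀ {x y : X} (g : Hom x y), comp g (id x) = g
  comp_inv : ∀ {x y : X} (g : Hom x y), comp g (inv g) = id y
  inv_comp : ∀ {x y : X} (g : Hom x y), comp (inv g) g = id x

/-- A crossed module of groupoids over the object space `X`: a groupoid `G`
over `X`, a bundle of groups `H` over `X`, a morphism `δ : H → G` over the
identity of `X` (landing in loops), and an action `act` of `G` on `H` by
group isomorphisms (`act g : H y → H x` for `g : Hom x y`), satisfying
`δ (act g a) = g⁻¹ · δ a · g` and `act (δ a) b = a⁻¹ b a`. -/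
structure XMod (X : Type) where
  G : GpdOver X
  H : X → Type
  mul : ∀ {x : X}, H x → H x → H x
  one : ∀ x : X, H x
  hinv : ∀ {x : X}, H x → H x
  mul_assoc : ∀ {x : X} (a b c : H x), mul (mul a b) c = mul a (mul b c)
  one_mul : ∀ {x : X} (a : H x), mul (one x) a = a
  mul_one : ∀ {x : X} (a : H x), mul a (one x) = a
  inv_mul : ∀ {x : X} (a : H x), mul (hinv a) a = one x
  mul_inv : ∀ {x : X} (a : H x), mul a (hinv a) = one x
  δ : ∀ {x : X}, H x → G.Hom x x
  δ_mul : ∀ {x : X} (a b : H x), δ (mul a b) = G.comp (δ a) (δ b)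
  δ_one : ∀ x : X, δ (one x) = G.id x
  act : ∀ {x y : X}, G.Hom x y → H y → H x
  act_id : ∀ {x : X} (a : H x), act (G.id x) a = a
  act_comp : ∀ {x y z : X} (g : G.Hom y z) (h : G.Hom x y) (a : H z),
    act (G.comp g h) a = act h (act g a)
  act_mul : ∀ {x y : X} (g : G.Hom x y) (a b : H y),
    act g (mul a b) = mul (act g a) (act g b)
  act_one : ∀ {x y : X} (g : G.Hom x y), act g (one y) = one x
  δ_act : ∀ {x y : X} (g : G.Hom x y) (a : H y),
    δ (act g a) = G.comp (G.inv g) (G.comp (δ a) g)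
  act_δ : ∀ {x : X} (a b : H x), act (δ a) b = mul (hinv a) (mul b a)

/-- A strict morphism of groupoids over the same object space `X`. -/
structure GpdHom {X : Type} (M N : GpdOver X) where
  map : ∀ {x y : X}, M.Hom x y → N.Hom x y
  map_comp : ∀ {x y z : X} (g : M.Hom y z) (h : M.Hom x y),
    map (M.comp g h) = N.comp (map g) (map h)
  map_id : ∀ x : X, map (M.id x) = N.id x
  map_inv : ∀ {x y : X} (g : M.Hom x y), map (M.inv g) = N.inv (map g)

/-- A strict morphism of crossed modules of groupoids over the same object
space `X`. -/
structure XModHom {X : Type} (A B : XMod X) where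
  mapH : ∀ {x : X}, A.H x → B.H x
  mapG : ∀ {x y : X}, A.G.Hom x y → B.G.Hom x y
  mapH_mul : ∀ {x : X} (a b : A.H x), mapH (A.mul a b) = B.mul (mapH a) (mapH b)
  mapG_comp : ∀ {x y z : X} (g : A.G.Hom y z) (h : A.G.Hom x y),
    mapG (A.G.comp g h) = B.G.comp (mapG g) (mapG h)
  mapG_id : ∀ x : X, mapG (A.G.id x) = B.G.id x
  comm : ∀ {x : X} (a : A.H x), B.δ (mapH a) = mapG (A.δ a)
  equivar : ∀ {x y : X} (g : A.G.Hom x y) (a : A.H y),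
    mapH (A.act g a) = B.act (mapG g) (mapH a)

/-- A crossing from the crossed module `A` to the crossed module `B`
(both over the same object space `X`, with trivial anchor maps):
a groupoid `M` over `X` together with morphisms `α₁ : H₁ → M`,
`α₂ : M → G₁`, `β₁ : H₂ → M`, `β₂ : M → G₂` (all the identity on objects),
such that `α₂∘α₁ = ∂₁`, `β₂∘β₁ = ∂₂`, the diagonals are complexes,
`H₂ → M → G₁` is an extension of groupoids, and the conjugation identities
hold. -/
structure Crossing {X : Type} (A B : XMod X) where
  M : GpdOver X
  α₁ : ∀ {x : X}, A.H x → M.Hom x x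
  α₂ : GpdHom M A.G
  β₁ : ∀ {x : X}, B.H x → M.Hom x x
  β₂ : GpdHom M B.G
  α₁_mul : ∀ {x : X} (a b : A.H x), α₁ (A.mul a b) = M.comp (α₁ a) (α₁ b)
  β₁_mul : ∀ {x : X} (a b : B.H x), β₁ (B.mul a b) = M.comp (β₁ a) (β₁ b)
  tri₁ : ∀ {x : X} (a : A.H x), α₂.map (α₁ a) = A.δ a
  tri₂ : ∀ {x : X} (b : B.H x), β₂.map (β₁ b) = B.δ b
  diag₁ : ∀ {x : X} (a : A.H x), β₂.map (α₁ a) = B.G.id x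
  diag₂ : ∀ {x : X} (b : B.H x), α₂.map (β₁ b) = A.G.id x
  β₁_inj : ∀ {x : X} (b b' : B.H x), β₁ b = β₁ b' → b = b'
  α₂_surj : ∀ {x y : X} (g : A.G.Hom x y), ∃ m : M.Hom x y, α₂.map m = g
  exact₁ : ∀ {x : X} (m : M.Hom x x), α₂.map m = A.G.id x → ∃ b : B.H x, β₁ b = m
  conj₁ : ∀ {x y : X} (m : M.Hom x y) (a : A.H y),
    α₁ (A.act (α₂.map m) a) = M.comp (M.inv m) (M.comp (α₁ a) m)
  conj₂ : ∀ {x y : X} (m : M.Hom x y) (b : B.H y),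
    β₁ (B.act (β₂.map m) b) = M.comp (M.inv m) (M.comp (β₁ b) m)

/-- A crossed extension of `A` and `B`: a crossing for which the other
diagonal `H₁ → M → G₂` is also an extension of groupoids. -/
structure CrossedExt {X : Type} (A B : XMod X) extends Crossing A B where
  α₁_inj : ∀ {x : X} (a a' : A.H x), α₁ a = α₁ a' → a = a'
  β₂_surj : ∀ {x y : X} (g : B.G.Hom x y), ∃ m : M.Hom x y, β₂.map m = g
  exact₂ : ∀ {x : X} (m : M.Hom x x), β₂.map m = B.G.id x → ∃ a : A.H x, α₁ a = m

section CrossedSdp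

variable {X : Type} {A B : XMod X} (C : Crossing A B)

/-- Arrows of the semidirect product `H₁ ⋊ M` (for the `M`-action on `H₁`
via `α₂`): pairs `(h₁, m)` with `h₁ ∈ H₁^{t m}`. -/
def SPair (x y : X) : Type := A.H y × C.M.Hom x y

/-- The product of `H₁ ⋊ M`:
`(h, m)·(k, n) = (h · c₁(α₂(m)⁻¹)(k), m·n)`. -/
def sProd {x y z : X} (p : SPair C y z) (q : SPair C x y) : SPair C x z :=
  (A.mul p.1 (A.act (A.G.inv (C.α₂.map p.2)) q.1), C.M.comp p.2 q.2)

/-- The relation induced by the `H₂`-action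
`h₂ · (h₁, m) = (h₁, β₁(h₂)·m)`. -/
def SRel (x y : X) (p q : SPair C x y) : Prop :=
  p.1 = q.1 ∧ ∃ b : B.H y, p.2 = C.M.comp (C.β₁ b) q.2

/-- Arrows of the crossed semidirect product `H₁ ⋊_{H₂} M`. -/
def SQ (x y : X) : Type := Quot (SRel C x y)

/-- The class of a pair in `H₁ ⋊_{H₂} M`. -/
def smk {x y : X} (p : SPair C x y) : SQ C x y := Quot.mk _ p

end CrossedSdp

namespace CSPAux

variable {X : Type}

theorem gpd_left_inv_unique (G : GpdOver X) {x y : X} (g : G.Hom x y) (k : G.Hom y x)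
    (h : G.comp k g = G.id x) : k = G.inv g := by
  calc k = G.comp k (G.comp g (G.inv g)) := by rw [G.comp_inv, G.comp_id]
  _ = G.comp (G.comp k g) (G.inv g) := by rw [G.comp_assoc]
  _ = G.inv g := by rw [h, G.id_comp]

theorem gpd_inv_id (G : GpdOver X) (x : X) : G.inv (G.id x) = G.id x :=
  (gpd_left_inv_unique G (G.id x) (G.id x) (G.id_comp _)).symm

theorem gpd_inv_inv (G : GpdOver X) {x y : X} (g : G.Hom x y) : G.inv (G.inv g) = g := by
  have := gpd_left_inv_unique G (G.inv g) g (G.comp_inv g)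
  exact this.symm

theorem gpd_inv_comp' (G : GpdOver X) {x y z : X} (g : G.Hom y z) (h : G.Hom x y) :
    G.inv (G.comp g h) = G.comp (G.inv h) (G.inv g) := by
  refine (gpd_left_inv_unique G _ _ ?_).symm
  rw [G.comp_assoc, ← G.comp_assoc (G.inv g) g h, G.inv_comp, G.id_comp, G.inv_comp]

variable {A B : XMod X} (C : Crossing A B)

theorem hinv_unique {x : X} (a y : A.H x) (h : A.mul y a = A.one x) : y = A.hinv a := by
  calc y = A.mul y (A.mul a (A.hinv a)) := by rw [A.mul_inv, A.mul_one]
  _ = A.mul (A.mul y a) (A.hinv a) := by rw [A.mul_assoc]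
  _ = A.hinv a := by rw [h, A.one_mul]

theorem act_hinv {x y : X} (g : A.G.Hom x y) (a : A.H y) :
    A.act g (A.hinv a) = A.hinv (A.act g a) := by
  apply hinv_unique
  rw [← A.act_mul, A.inv_mul, A.act_one]

theorem a2_beta {x y : X} (b : B.H y) (m : C.M.Hom x y) :
    C.α₂.map (C.M.comp (C.β₁ b) m) = C.α₂.map m := by
  rw [C.α₂.map_comp, C.diag₂, A.G.id_comp]

theorem srel_alpha {x y : X} {p q : SPair C x y} (h : SRel C x y p q) :
    C.α₂.map p.2 = C.α₂.map q.2 := by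
  obtain ⟨-, b, hb⟩ := h
  rw [hb, a2_beta]

theorem smk_eq {x y : X} (p q : SPair C x y) (h1 : p.1 = q.1)
    (h2 : C.α₂.map p.2 = C.α₂.map q.2) : smk C p = smk C q := by
  obtain ⟨b, hb⟩ := C.exact₁ (C.M.comp p.2 (C.M.inv q.2))
    (by rw [C.α₂.map_comp, C.α₂.map_inv, h2, A.G.comp_inv])
  apply Quot.sound
  refine ⟨h1, b, ?_⟩
  rw [hb, C.M.comp_assoc, C.M.inv_comp, C.M.comp_id]

/-- Well-defined composition on the quotient. -/
def qcomp {x y z : X} : SQ C y z → SQ C x y → SQ C x z :=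
  Quot.lift₂ (fun p q => smk C (sProd C p q))
    (fun p q q' h => by
      refine smk_eq C _ _ ?_ ?_
      · show A.mul p.1 (A.act _ q.1) = A.mul p.1 (A.act _ q'.1)
        rw [h.1]
      · show C.α₂.map (C.M.comp p.2 q.2) = C.α₂.map (C.M.comp p.2 q'.2)
        rw [C.α₂.map_comp, C.α₂.map_comp, srel_alpha C h])
    (fun p p' q h => by
      refine smk_eq C _ _ ?_ ?_
      · show A.mul p.1 (A.act (A.G.inv (C.α₂.map p.2)) q.1)
            = A.mul p'.1 (A.act (A.G.inv (C.α₂.map p'.2)) q.1)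
        rw [h.1, srel_alpha C h]
      · show C.α₂.map (C.M.comp p.2 q.2) = C.α₂.map (C.M.comp p'.2 q.2)
        rw [C.α₂.map_comp, C.α₂.map_comp, srel_alpha C h])

/-- Well-defined inversion on the quotient. -/
def qinv {x y : X} : SQ C x y → SQ C y x :=
  Quot.lift
    (fun p => smk C (A.hinv (A.act (C.α₂.map p.2) p.1), C.M.inv p.2))
    (fun p q h => by
      refine smk_eq C _ _ ?_ ?_
      · show A.hinv (A.act (C.α₂.map p.2) p.1) = A.hinv (A.act (C.α₂.map q.2) q.1)
        rw [h.1, srel_alpha C h]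
      · show C.α₂.map (C.M.inv p.2) = C.α₂.map (C.M.inv q.2)
        rw [C.α₂.map_inv, C.α₂.map_inv, srel_alpha C h])

def qid (x : X) : SQ C x x := smk C (A.one x, C.M.id x)

theorem sProd_assoc {x y z w : X} (p : SPair C z w) (q : SPair C y z) (r : SPair C x y) :
    sProd C (sProd C p q) r = sProd C p (sProd C q r) := by
  show (_, _) = (_, _)
  refine Prod.ext ?_ (C.M.comp_assoc _ _ _)
  show A.mul (A.mul p.1 (A.act (A.G.inv (C.α₂.map p.2)) q.1))
      (A.act (A.G.inv (C.α₂.map (C.M.comp p.2 q.2))) r.1)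
    = A.mul p.1 (A.act (A.G.inv (C.α₂.map p.2))
        (A.mul q.1 (A.act (A.G.inv (C.α₂.map q.2)) r.1)))
  rw [A.mul_assoc, A.act_mul, C.α₂.map_comp, gpd_inv_comp', A.act_comp]

noncomputable def psi {x y : X} (p : A.H y × A.G.Hom x y) : SQ C x y :=
  smk C (p.1, Classical.choose (C.α₂_surj p.2))

theorem psi_spec {x y : X} (g : A.G.Hom x y) :
    C.α₂.map (Classical.choose (C.α₂_surj g)) = g := Classical.choose_spec (C.α₂_surj g)

def Fmap {x y : X} : SQ C x y → A.H y × A.G.Hom x y :=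
  Quot.lift (fun p => (p.1, C.α₂.map p.2))
    (fun p q h => by
      show (p.1, C.α₂.map p.2) = (q.1, C.α₂.map q.2)
      rw [h.1, srel_alpha C h])

end CSPAux

/-- Let `C = (M, α₁, α₂, β₁, β₂)` be a crossing from `𝔊₁`
to `𝔊₂` over `X`, and let `H₂` act on the semidirect product `H₁ ⋊ M` by
`h₂·(h₁, m) = (h₁, β₁(h₂)·m)`.  Then the groupoid structure of `H₁ ⋊ M`
descends to the quotient `H₁ ⋊_{H₂} M`: the product
`[h₁,m]·[k₁,n] = [h₁·c₁(α₂(m)⁻¹)(k₁), m·n]` and the inverse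
`[h₁,m]⁻¹ = [(c₁(α₂(m))(h₁))⁻¹, m⁻¹]` are well defined and make
`H₁ ⋊_{H₂} M` a groupoid over `X`; moreover the exactness of
`H₂ —β₁→ M —α₂→ G₁` induces an isomorphism of groupoids
`H₁ ⋊ G₁ ≅ H₁ ⋊_{H₂} M`. -/
theorem crossed_semidirect_product {X : Type} (A B : XMod X)
    (C : Crossing A B) :
    ∃ (qcomp : ∀ {x y z : X}, SQ C y z → SQ C x y → SQ C x z)
      (qinv : ∀ {x y : X}, SQ C x y → SQ C y x)
      (qid : ∀ x : X, SQ C x x),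
      -- the product and inverse are well defined, with the stated formulas
      (∀ {x y z : X} (p : SPair C y z) (q : SPair C x y),
          qcomp (smk C p) (smk C q) = smk C (sProd C p q)) ∧
      (∀ {x y : X} (p : SPair C x y),
          qinv (smk C p)
            = smk C (A.hinv (A.act (C.α₂.map p.2) p.1), C.M.inv p.2)) ∧
      (∀ x : X, qid x = smk C (A.one x, C.M.id x)) ∧
      -- they make `H₁ ⋊_{H₂} M` a groupoid over `X`
      (∀ {x y z w : X} (c : SQ C z w) (d : SQ C y z) (e : SQ C x y),
          qcomp (qcomp c d) e = qcomp c (qcomp d e)) ∧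
      (∀ {x y : X} (c : SQ C x y), qcomp (qid y) c = c) ∧
      (∀ {x y : X} (c : SQ C x y), qcomp c (qid x) = c) ∧
      (∀ {x y : X} (c : SQ C x y), qcomp c (qinv c) = qid y) ∧
      (∀ {x y : X} (c : SQ C x y), qcomp (qinv c) c = qid x) ∧
      -- and there is an isomorphism of groupoids `H₁ ⋊ G₁ ≅ H₁ ⋊_{H₂} M`
      (∃ Ψ : ∀ {x y : X}, A.H y × A.G.Hom x y → SQ C x y,
        (∀ x y : X,
            Function.Bijective (fun p : A.H y × A.G.Hom x y => Ψ p)) ∧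
        (∀ {x y z : X} (p : A.H z × A.G.Hom y z) (q : A.H y × A.G.Hom x y),
            Ψ ((A.mul p.1 (A.act (A.G.inv p.2) q.1), A.G.comp p.2 q.2) :
                A.H z × A.G.Hom x z)
              = qcomp (Ψ p) (Ψ q)) ∧
        (∀ x : X, Ψ ((A.one x, A.G.id x) : A.H x × A.G.Hom x x) = qid x)) := by
  classical
  open CSPAux in
  refine ⟨fun {x y z} => qcomp C, fun {x y} => qinv C, qid C,
    fun {x y z} p q => rfl, fun {x y} p => rfl, fun x => rfl,
    ?_, ?_, ?_, ?_, ?_, ?_⟩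
  · -- associativity
    intro x y z w c d e
    induction c using Quot.ind with | _ p =>
    induction d using Quot.ind with | _ q =>
    induction e using Quot.ind with | _ r =>
    show smk C (sProd C (sProd C p q) r) = smk C (sProd C p (sProd C q r))
    rw [sProd_assoc]
  · -- left identity
    intro x y c
    induction c using Quot.ind with | _ p =>
    show smk C (sProd C (A.one y, C.M.id y) p) = smk C p
    have : sProd C (A.one y, C.M.id y) p = p := by
      show (A.mul (A.one y) (A.act (A.G.inv (C.α₂.map (C.M.id y))) p.1),
        C.M.comp (C.M.id y) p.2) = p
      rw [C.α₂.map_id, gpd_inv_id, A.act_id, A.one_mul, C.M.id_comp]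
      rfl
    rw [this]
  · -- right identity
    intro x y c
    induction c using Quot.ind with | _ p =>
    show smk C (sProd C p (A.one x, C.M.id x)) = smk C p
    have : sProd C p (A.one x, C.M.id x) = p := by
      show (A.mul p.1 (A.act (A.G.inv (C.α₂.map p.2)) (A.one x)),
        C.M.comp p.2 (C.M.id x)) = p
      rw [A.act_one, A.mul_one, C.M.comp_id]
      rfl
    rw [this]
  · -- comp_inv
    intro x y c
    induction c using Quot.ind with | _ p =>
    show smk C (sProd C p (A.hinv (A.act (C.α₂.map p.2) p.1), C.M.inv p.2)) = qid C y
    have : sProd C p (A.hinv (A.act (C.α₂.map p.2) p.1), C.M.inv p.2)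
        = (A.one y, C.M.id y) := by
      show (A.mul p.1 (A.act (A.G.inv (C.α₂.map p.2))
          (A.hinv (A.act (C.α₂.map p.2) p.1))), C.M.comp p.2 (C.M.inv p.2))
        = (A.one y, C.M.id y)
      rw [act_hinv, ← A.act_comp, ← C.α₂.map_inv, ← C.α₂.map_comp, C.M.comp_inv,
        C.α₂.map_id, A.act_id, A.mul_inv]
    rw [this]; rfl
  · -- inv_comp
    intro x y c
    induction c using Quot.ind with | _ p =>
    show smk C (sProd C (A.hinv (A.act (C.α₂.map p.2) p.1), C.M.inv p.2) p) = qid C x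
    have : sProd C (A.hinv (A.act (C.α₂.map p.2) p.1), C.M.inv p.2) p
        = (A.one x, C.M.id x) := by
      show (A.mul (A.hinv (A.act (C.α₂.map p.2) p.1))
          (A.act (A.G.inv (C.α₂.map (C.M.inv p.2))) p.1), C.M.comp (C.M.inv p.2) p.2)
        = (A.one x, C.M.id x)
      rw [C.α₂.map_inv, gpd_inv_inv, A.inv_mul, C.M.inv_comp]
    rw [this]; rfl
  · -- the isomorphism
    refine ⟨fun {x y} p => psi C p, ?_, ?_, ?_⟩
    · intro x y
      refine Function.bijective_iff_has_inverse.mpr ⟨Fmap C, ?_, ?_⟩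
      · intro p
        show Fmap C (smk C (p.1, Classical.choose (C.α₂_surj p.2))) = p
        show (p.1, C.α₂.map (Classical.choose (C.α₂_surj p.2))) = p
        rw [psi_spec]
      · intro c
        induction c using Quot.ind with | _ p =>
        show psi C (p.1, C.α₂.map p.2) = smk C p
        exact smk_eq C _ _ rfl (psi_spec C _)
    · intro x y z p q
      refine (smk_eq C _ _ ?_ ?_).trans rfl
      · show A.mul p.1 (A.act (A.G.inv p.2) q.1)
          = A.mul p.1 (A.act (A.G.inv (C.α₂.map
              (Classical.choose (C.α₂_surj p.2)))) q.1)
        rw [psi_spec]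
      · show C.α₂.map (Classical.choose (C.α₂_surj (A.G.comp p.2 q.2)))
          = C.α₂.map (C.M.comp (Classical.choose (C.α₂_surj p.2))
              (Classical.choose (C.α₂_surj q.2)))
        rw [psi_spec, C.α₂.map_comp, psi_spec, psi_spec]
    · intro x
      refine smk_eq C _ _ rfl ?_
      rw [psi_spec, C.α₂.map_id]
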